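/- arXiv:1710.07386 — 4 statements merged into one kernel-verified Lean document; each statement's English description precedes it below -/
import Mathlib

section
/- Let C ⊆ F_q^n be a linear code with minimal locality r that is an (n,k,t,m,τ) batch code (every multiset of t coordinate queries can be answered reading at most τ symbols from each of m buckets, using disjoint recovery sets). Then mτ ≥ (t−1)r + 1. -/
/-- `S` is a recovery set for coordinate `i` of the code `C`: the values of a codeword
on `S` determine its value at `i`. (Reading `i` itself corresponds to `i ∈ S`.) -/
def Recovers {F : Type*} [Field F] {n : ℕ} (C : Set (Fin n → F)) (i : Fin n)
    (S : Finset (Fin n)) : Prop :=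
  ∀ c ∈ C, ∀ c' ∈ C, (∀ j ∈ S, c j = c' j) → c i = c' i

/-- `C` has locality `r`: every coordinate can be recovered from at most `r` other
coordinates. -/
def HasLocality {F : Type*} [Field F] {n : ℕ} (C : Set (Fin n → F)) (r : ℕ) : Prop :=
  ∀ i : Fin n, ∃ S : Finset (Fin n), i ∉ S ∧ S.card ≤ r ∧ Recovers C i S

/-- `C` is an `(n,k,t,m,τ)` batch code with respect to the bucket partition
`B : Fin n → Fin m`: every multiset of `t` coordinate queries can be answered by
pairwise disjoint recovery sets whose union reads at most `τ` coordinates from each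
bucket. -/
def IsBatchCode {F : Type*} [Field F] {n : ℕ} (C : Set (Fin n → F)) (t : ℕ) {m : ℕ}
    (B : Fin n → Fin m) (τ : ℕ) : Prop :=
  ∀ q : Fin t → Fin n, ∃ R : Fin t → Finset (Fin n),
    (∀ a, Recovers C (q a) (R a)) ∧
    (∀ a b, a ≠ b → Disjoint (R a) (R b)) ∧
    (∀ β : Fin m, ((Finset.univ.biUnion R).filter (fun j => B j = β)).card ≤ τ)

/-- If a linear code with minimal locality `r` is an `(n,k,t,m,τ)` batch code,
then `mτ ≥ (t-1)r + 1`. -/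
theorem batch_locality_bound {F : Type*} [Field F] {n t m τ r : ℕ}
    (C : Submodule F (Fin n → F)) (B : Fin n → Fin m)
    (ht : 0 < t) (hr : 1 ≤ r)
    (hloc : HasLocality (C : Set (Fin n → F)) r)
    (hmin : ∀ r' < r, ¬ HasLocality (C : Set (Fin n → F)) r')
    (hbatch : IsBatchCode (C : Set (Fin n → F)) t B τ) :
    (t - 1) * r + 1 ≤ m * τ := by
  -- get a hard coordinate i
  have hmin' := hmin (r - 1) (by omega)
  simp only [HasLocality, not_forall] at hmin'
  obtain ⟨i, hi⟩ := hmin'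
  push_neg at hi
  -- hi : ∀ S, i ∉ S → S.card ≤ r - 1 → ¬ Recovers C i S
  have hhard : ∀ S : Finset (Fin n), i ∉ S → Recovers (C : Set (Fin n → F)) i S →
      r ≤ S.card := by
    intro S hiS hrec
    by_contra h
    exact hi S hiS (by omega) hrec
  obtain ⟨R, hRrec, hRdisj, hRbucket⟩ := hbatch (fun _ => i)
  -- union card ≤ m * τ
  have hU : (Finset.univ.biUnion R).card ≤ m * τ := by
    have := Finset.card_eq_sum_card_fiberwise
      (s := Finset.univ.biUnion R) (t := (Finset.univ : Finset (Fin m))) (f := B)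
      (fun x _ => Finset.mem_univ _)
    rw [this]
    calc ∑ β : Fin m, ((Finset.univ.biUnion R).filter (fun j => B j = β)).card
        ≤ ∑ _β : Fin m, τ := Finset.sum_le_sum (fun β _ => hRbucket β)
      _ = m * τ := by simp [Finset.sum_const, Finset.card_univ]
  have hcard : (Finset.univ.biUnion R).card = ∑ a : Fin t, (R a).card :=
    Finset.card_biUnion (fun a _ b _ hab => hRdisj a b hab)
  -- lower bound the sum
  have hlow : (t - 1) * r + 1 ≤ ∑ a : Fin t, (R a).card := by
    by_cases hex : ∃ a0, i ∈ R a0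
    · obtain ⟨a0, ha0⟩ := hex
      have h1 : 1 ≤ (R a0).card := Finset.card_pos.mpr ⟨i, ha0⟩
      have h2 : (t - 1) * r ≤ ∑ a ∈ Finset.univ.erase a0, (R a).card := by
        calc (t - 1) * r = (Finset.univ.erase a0).card * r := by
              rw [Finset.card_erase_of_mem (Finset.mem_univ a0), Finset.card_univ,
                Fintype.card_fin]
          _ ≤ ∑ a ∈ Finset.univ.erase a0, (R a).card := by
              rw [← smul_eq_mul]
              refine Finset.card_nsmul_le_sum _ _ _ (fun a ha => ?_)
              have hne : a ≠ a0 := Finset.ne_of_mem_erase ha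
              have hiR : i ∉ R a := fun hiR =>
                (Finset.disjoint_left.mp (hRdisj a a0 hne)) hiR ha0
              exact hhard (R a) hiR (hRrec a)
      calc (t - 1) * r + 1 ≤ (∑ a ∈ Finset.univ.erase a0, (R a).card) + (R a0).card := by
            omega
        _ = ∑ a : Fin t, (R a).card := Finset.sum_erase_add _ _ (Finset.mem_univ a0)
    · push_neg at hex
      have : ∀ a : Fin t, r ≤ (R a).card := fun a => hhard (R a) (hex a) (hRrec a)
      calc (t - 1) * r + 1 ≤ t * r := by
            have : t * r = (t - 1) * r + r := by
              cases t with
              | zero => omega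
              | succ t' => simp [Nat.succ_sub_one, Nat.succ_mul]
            omega
        _ = (Finset.univ : Finset (Fin t)).card * r := by
              rw [Finset.card_univ, Fintype.card_fin]
        _ ≤ ∑ a : Fin t, (R a).card := by
              rw [← smul_eq_mul]
              exact Finset.card_nsmul_le_sum _ _ _ (fun a _ => this a)
  omega
end

section
/- For q ≠ 2 a prime power and μ ≥ 1, the minimum Hamming weight of a nonzero codeword in RM_q(1,μ)^⊥ is exactly 3. -/
open Finset

/-- The `q`-ary first order Reed–Müller code `RM_q(1,μ)`: evaluations of polynomials of
total degree at most 1 (affine functions) at all points of `F^μ`. -/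
def RMone (F : Type*) [Field F] (μ : ℕ) : Set ((Fin μ → F) → F) :=
  {w | ∃ (b : Fin μ → F) (c : F), ∀ x, w x = (∑ i, b i * x i) + c}

/-- The dual code of a code of length `q^μ` indexed by the points of `F^μ`. -/
def dualCode (F : Type*) [Field F] [Fintype F] (μ : ℕ)
    (C : Set ((Fin μ → F) → F)) : Set ((Fin μ → F) → F) :=
  {l | ∀ w ∈ C, ∑ x : Fin μ → F, l x * w x = 0}

lemma dual_sum_const {F : Type*} [Field F] [Fintype F] {μ : ℕ}
    {l : (Fin μ → F) → F} (hl : l ∈ dualCode F μ (RMone F μ)) :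
    ∑ x : Fin μ → F, l x = 0 := by
  have := hl (fun _ => 1) ⟨0, 1, fun x => by simp⟩
  simpa using this

lemma dual_sum_coord {F : Type*} [Field F] [Fintype F] [DecidableEq F] {μ : ℕ}
    {l : (Fin μ → F) → F} (hl : l ∈ dualCode F μ (RMone F μ)) (i : Fin μ) :
    ∑ x : Fin μ → F, l x * x i = 0 := by
  have := hl (fun x => x i) ⟨Pi.single i 1, 0, fun x => by
    simp [Pi.single_apply, ite_mul]⟩
  simpa using this

/-- For a finite field `F` with `|F| = q ≠ 2` and `μ ≥ 1`, the minimum Hamming weight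
of a nonzero codeword of `RM_q(1,μ)^⊥` is exactly 3. -/
theorem min_weight_dual_RMone_qgt2 (F : Type*) [Field F] [Fintype F] [DecidableEq F]
    (hq : Fintype.card F ≠ 2) (μ : ℕ) (hμ : 1 ≤ μ) :
    (∃ l ∈ dualCode F μ (RMone F μ), l ≠ 0 ∧ hammingNorm l = 3) ∧
    (∀ l ∈ dualCode F μ (RMone F μ), l ≠ 0 → 3 ≤ hammingNorm l) := by
  constructor
  · -- existence of a weight-3 codeword
    -- get a with a ≠ 0, a ≠ 1
    have hcard : 2 < Fintype.card F := by
      have h2 : 1 < Fintype.card F := Fintype.one_lt_card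
      omega
    obtain ⟨a, ha⟩ : ∃ a : F, a ∉ ({0, 1} : Finset F) := by
      have h1 : ({0, 1} : Finset F).card ≤ 2 := card_insert_le _ _ |>.trans (by simp)
      have h2 : ({0, 1} : Finset F)ᶜ.Nonempty := by
        rw [← Finset.card_pos, Finset.card_compl]
        omega
      obtain ⟨a, ha⟩ := h2
      exact ⟨a, Finset.mem_compl.mp ha⟩
    simp only [mem_insert, mem_singleton, not_or] at ha
    obtain ⟨ha0, ha1⟩ := ha
    set i0 : Fin μ := ⟨0, hμ⟩
    set p1 : Fin μ → F := 0 with hp1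
    set p2 : Fin μ → F := fun _ => 1 with hp2
    set p3 : Fin μ → F := fun _ => a with hp3
    have h12 : p1 ≠ p2 := fun h => by have := congrFun h i0; simp [hp1, hp2] at this
    have h13 : p1 ≠ p3 := fun h => by
      have := congrFun h i0; simp [hp1, hp3] at this; exact ha0 this.symm
    have h23 : p2 ≠ p3 := fun h => by
      have := congrFun h i0; simp [hp2, hp3] at this; exact ha1 this.symm
    set l : (Fin μ → F) → F := fun x =>
      if x = p1 then a - 1 else if x = p2 then -a else if x = p3 then 1 else 0 with hl
    have hsupp : ({x | l x ≠ 0} : Finset (Fin μ → F)) = {p1, p2, p3} := by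
      ext x
      by_cases h1 : x = p1 <;> by_cases h2 : x = p2 <;> by_cases h3 : x = p3 <;>
        simp [hl, h1, h2, h3, sub_eq_zero, ha0, ha1, neg_eq_zero, Ne.symm ha1,
          Ne.symm h12, Ne.symm h13, Ne.symm h23]
    refine ⟨l, ?_, ?_, ?_⟩
    · intro w hw
      obtain ⟨b, c, hwb⟩ := hw
      have hzero : ∀ x ∉ ({p1, p2, p3} : Finset (Fin μ → F)), l x * w x = 0 := by
        intro x hx
        simp only [mem_insert, mem_singleton, not_or] at hx
        simp [hl, hx.1, hx.2.1, hx.2.2]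
      rw [← Finset.sum_subset (Finset.subset_univ _) (fun x _ hx => hzero x hx)]
      rw [Finset.sum_insert (by simp [h12, h13]), Finset.sum_insert (by simp [h23]),
        Finset.sum_singleton]
      have e1 : w p1 = c := by rw [hwb]; simp [hp1]
      have e2 : w p2 = (∑ i, b i) + c := by rw [hwb]; simp [hp2]
      have e3 : w p3 = (∑ i, b i) * a + c := by
        rw [hwb]; simp [hp3, Finset.sum_mul]
      have lp1 : l p1 = a - 1 := by simp [hl]
      have lp2 : l p2 = -a := by simp [hl, Ne.symm h12]
      have lp3 : l p3 = 1 := by simp [hl, Ne.symm h13, Ne.symm h23]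
      rw [lp1, lp2, lp3, e1, e2, e3]
      ring
    · intro h
      have := congrFun h p1
      simp [hl, sub_eq_zero] at this
      exact ha1 this
    · show #{x | l x ≠ 0} = 3
      rw [hsupp]
      rw [card_insert_of_notMem (by simp [h12, h13]),
        card_insert_of_notMem (by simp [h23]), card_singleton]
  · -- lower bound
    intro l hl hne
    by_contra hlt
    push_neg at hlt
    set s : Finset (Fin μ → F) := {x | l x ≠ 0} with hs
    have hcard : s.card ≤ 2 := by
      have : hammingNorm l = s.card := rfl
      omega
    have hpos : 0 < s.card := by
      have : hammingNorm l ≠ 0 := hammingNorm_ne_zero_iff.mpr hne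
      have h' : hammingNorm l = s.card := rfl
      omega
    have hsum : ∑ x ∈ s, l x = 0 := by
      rw [hs, Finset.sum_filter_ne_zero]
      exact dual_sum_const hl
    have hsumi : ∀ i, ∑ x ∈ s, l x * x i = 0 := by
      intro i
      rw [← dual_sum_coord hl i]
      apply Finset.sum_subset (Finset.subset_univ _)
      intro x _ hx
      rw [hs] at hx
      simp only [mem_filter, mem_univ, true_and, not_not] at hx
      simp [hx]
    interval_cases h : s.card
    · -- card = 1
      obtain ⟨P, hP⟩ := Finset.card_eq_one.mp h
      have hPmem : P ∈ s := by rw [hP]; exact mem_singleton_self P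
      have hPne : l P ≠ 0 := by
        rw [hs] at hPmem; simpa using hPmem
      rw [hP, Finset.sum_singleton] at hsum
      exact hPne hsum
    · -- card = 2
      obtain ⟨P, Q, hPQ, hP⟩ := Finset.card_eq_two.mp h
      have hPmem : P ∈ s := by rw [hP]; simp
      have hPne : l P ≠ 0 := by rw [hs] at hPmem; simpa using hPmem
      rw [hP, Finset.sum_pair hPQ] at hsum
      have heq : P = Q := by
        funext i
        have hi := hsumi i
        rw [hP, Finset.sum_pair hPQ] at hi
        have hQ : l Q = -l P := eq_neg_of_add_eq_zero_right hsum
        rw [hQ] at hi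
        have h0 : l P * (P i - Q i) = 0 := by linear_combination hi
        rcases mul_eq_zero.mp h0 with h' | h'
        · exact absurd h' hPne
        · exact sub_eq_zero.mp h'
      exact hPQ heq
end

section
/- For every even μ ≥ 2, the set F_2^μ \ {0} can be partitioned into (2^μ − 1)/3 disjoint triples {A, B, C} of distinct nonzero vectors with A + B + C = 0. -/
/-!
Identify `F_2^(2k)` with `F_4^k` as an `F_2`-vector space. The unit group `F_4ˣ = {1, ω, ω²}` acts
freely on the nonzero vectors of `F_4^k`, and its orbits `{v, ω v, ω² v}` are the required
triples: they sum to `(1 + ω + ω²) v = 0`. More generally, the orbits of a nontrivial finite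
subgroup `G ≤ Kˣ` partition the nonzero vectors of a `K`-vector space into zero-sum blocks of
size `|G|`, because the elements of such a subgroup sum to zero.
-/

open Finset

section ZeroSumPartition

variable {W : Type*} [AddCommMonoid W] [Fintype W] [DecidableEq W]

structure IsZeroSumPartition (n : ℕ) (T : Finset (Finset W)) : Prop where
  card_eq : ∀ s ∈ T, s.card = n
  sum_eq_zero : ∀ s ∈ T, ∑ x ∈ s, x = 0
  pairwiseDisjoint : (T : Set (Finset W)).PairwiseDisjoint id
  sup_eq : T.sup id = univ.erase 0

namespace IsZeroSumPartition

variable {n : ℕ} {T : Finset (Finset W)}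

theorem zero_notMem (hT : IsZeroSumPartition n T) {s : Finset W} (hs : s ∈ T) : 0 ∉ s :=
  fun h0 => by simpa [hT.sup_eq] using le_sup (f := id) hs h0

theorem card_mul (hT : IsZeroSumPartition n T) : T.card * n = Fintype.card W - 1 := by
  calc T.card * n = ∑ s ∈ T, s.card := by rw [sum_congr rfl hT.card_eq, sum_const, smul_eq_mul]
    _ = (T.sup id).card := by
      rw [sup_eq_biUnion, card_biUnion fun s hs t ht hst => hT.pairwiseDisjoint hs ht hst]; rfl
    _ = Fintype.card W - 1 := by rw [hT.sup_eq, card_erase_of_mem (mem_univ 0), card_univ]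

theorem map {V : Type*} [AddCommMonoid V] [Fintype V] [DecidableEq V]
    (hT : IsZeroSumPartition n T) (e : W ≃+ V) :
    IsZeroSumPartition n (T.image (Finset.map e.toEquiv.toEmbedding)) where
  card_eq := forall_mem_image.2 fun s hs => (card_map _).trans (hT.card_eq s hs)
  sum_eq_zero := forall_mem_image.2 fun s hs => by
    simpa [sum_map] using congrArg e (hT.sum_eq_zero s hs)
  pairwiseDisjoint := by
    rw [coe_image]
    rintro _ ⟨s, hs, rfl⟩ _ ⟨t, ht, rfl⟩ hne
    exact (disjoint_map _).2 (hT.pairwiseDisjoint hs ht fun hst => hne (hst ▸ rfl))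
  sup_eq := by
    ext v
    simpa [mem_sup] using congrArg (e.symm v ∈ ·) hT.sup_eq

end IsZeroSumPartition

end ZeroSumPartition

namespace MulAction

variable (G : Type*) {α : Type*} [Group G] [Fintype G] [MulAction G α] [DecidableEq α]

def orbitFinset (a : α) : Finset α := univ.image fun g : G => g • a

@[simp]
theorem coe_orbitFinset (a : α) : (orbitFinset G a : Set α) = orbit G a := by
  simp [orbitFinset, orbit]

theorem mem_orbitFinset {a b : α} : b ∈ orbitFinset G a ↔ b ∈ orbit G a := by
  rw [← mem_coe, coe_orbitFinset]

theorem orbitFinset_eq_of_mem {a b : α} (h : b ∈ orbitFinset G a) :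
    orbitFinset G b = orbitFinset G a := by
  rwa [← coe_inj, coe_orbitFinset, coe_orbitFinset, orbit_eq_iff, ← mem_orbitFinset]

theorem pairwiseDisjoint_image_orbitFinset (s : Finset α) :
    (s.image (orbitFinset G) : Set (Finset α)).PairwiseDisjoint id := by
  simp only [coe_image]
  rintro _ ⟨a, -, rfl⟩ _ ⟨b, -, rfl⟩ hne
  refine disjoint_left.2 fun c hca hcb => hne ?_
  rw [← orbitFinset_eq_of_mem G hca, orbitFinset_eq_of_mem G hcb]

theorem sup_image_orbitFinset {s : Finset α} (hs : ∀ g : G, ∀ a ∈ s, g • a ∈ s) :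
    (s.image (orbitFinset G)).sup id = s := by
  ext b
  simp only [mem_sup, mem_image, id, exists_exists_and_eq_and]
  constructor
  · rintro ⟨a, ha, hb⟩
    obtain ⟨g, rfl⟩ := (mem_orbitFinset G).1 hb
    exact hs g a ha
  · exact fun hb => ⟨b, hb, (mem_orbitFinset G).2 (mem_orbit_self b)⟩

end MulAction

section Units

open MulAction

variable {K W : Type*} [DivisionRing K] [AddCommGroup W] [Module K W] (G : Subgroup Kˣ) {w : W}

theorem Subgroup.smul_left_injective_of_ne_zero (hw : w ≠ 0) :
    Function.Injective fun g : G => g • w := fun _ _ hgh =>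
  Subtype.ext (Units.ext (smul_left_injective K hw hgh))

variable [Fintype G] [DecidableEq W]

theorem card_orbitFinset_of_ne_zero (hw : w ≠ 0) : (orbitFinset G w).card = Nat.card G := by
  rw [orbitFinset, card_image_of_injective _ (Subgroup.smul_left_injective_of_ne_zero G hw),
    card_univ, Nat.card_eq_fintype_card]

theorem sum_orbitFinset_eq_zero (hG : G ≠ ⊥) (hw : w ≠ 0) : ∑ x ∈ orbitFinset G w, x = 0 := by
  rw [orbitFinset, sum_image fun g _ h _ hgh => Subgroup.smul_left_injective_of_ne_zero G hw hgh]
  calc ∑ g : G, g • w = (∑ g : G, ((g : Kˣ) : K)) • w := (sum_smul ..).symm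
    _ = 0 := by rw [FiniteField.sum_subgroup_units_eq_zero hG, zero_smul]

theorem isZeroSumPartition_image_orbitFinset [Fintype W] (hG : G ≠ ⊥) :
    IsZeroSumPartition (Nat.card G) ((univ.erase (0 : W)).image (orbitFinset G)) where
  card_eq := forall_mem_image.2 fun _ hw => card_orbitFinset_of_ne_zero G (ne_of_mem_erase hw)
  sum_eq_zero := forall_mem_image.2 fun _ hw => sum_orbitFinset_eq_zero G hG (ne_of_mem_erase hw)
  pairwiseDisjoint := pairwiseDisjoint_image_orbitFinset G _
  sup_eq := sup_image_orbitFinset G fun g _ hw =>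
    mem_erase.2 ⟨(smul_ne_zero_iff_ne g).2 (ne_of_mem_erase hw), mem_univ _⟩

end Units

theorem partition_into_zero_sum_triples_even_general (μ : ℕ) (he : Even μ) :
    ∃ T : Finset (Finset (Fin μ → ZMod 2)),
      T.card = (2 ^ μ - 1) / 3 ∧
      (∀ s ∈ T, s.card = 3 ∧ (0 : Fin μ → ZMod 2) ∉ s ∧ ∑ x ∈ s, x = 0) ∧
      (T : Set (Finset (Fin μ → ZMod 2))).PairwiseDisjoint id ∧
      T.sup id = Finset.univ.erase (0 : Fin μ → ZMod 2) := by
  classical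
  obtain ⟨k, rfl⟩ := he
  have hcard : Nat.card (⊤ : Subgroup (GaloisField 2 2)ˣ) = 3 := by
    rw [Subgroup.card_top, Nat.card_units, GaloisField.card 2 2 two_ne_zero]
    rfl
  have hbot : (⊤ : Subgroup (GaloisField 2 2)ˣ) ≠ ⊥ :=
    (Subgroup.one_lt_card_iff_ne_bot _).1 (by rw [hcard]; norm_num)
  have : Fintype (GaloisField 2 2) := Fintype.ofFinite _
  have hrank : Module.finrank (ZMod 2) (Fin k → GaloisField 2 2) =
      Module.finrank (ZMod 2) (Fin (k + k) → ZMod 2) := by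
    simp [Module.finrank_pi_fintype, GaloisField.finrank 2 two_ne_zero, mul_two]
  obtain ⟨T, hT⟩ : ∃ T : Finset (Finset (Fin (k + k) → ZMod 2)), IsZeroSumPartition 3 T :=
    ⟨_, hcard ▸ (isZeroSumPartition_image_orbitFinset (W := Fin k → GaloisField 2 2) ⊤ hbot).map
      (LinearEquiv.ofFinrankEq _ _ hrank).toAddEquiv⟩
  refine ⟨_, ?_, fun s hs => ⟨hT.card_eq s hs, hT.zero_notMem hs, hT.sum_eq_zero s hs⟩,
    hT.pairwiseDisjoint, hT.sup_eq⟩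
  have hcount := hT.card_mul
  rw [Fintype.card_fun, ZMod.card, Fintype.card_fin] at hcount
  rw [← hcount, Nat.mul_div_cancel _ three_pos]

/-- For even `μ ≥ 2`, the nonzero vectors of `F_2^μ` can be partitioned into
`(2^μ - 1)/3` disjoint triples of distinct nonzero vectors summing to zero. -/
theorem partition_into_zero_sum_triples_even (μ : ℕ) (hμ : 2 ≤ μ) (he : Even μ) :
    ∃ T : Finset (Finset (Fin μ → ZMod 2)),
      T.card = (2 ^ μ - 1) / 3 ∧
      (∀ s ∈ T, s.card = 3 ∧ (0 : Fin μ → ZMod 2) ∉ s ∧ ∑ x ∈ s, x = 0) ∧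
      (T : Set (Finset (Fin μ → ZMod 2))).PairwiseDisjoint id ∧
      T.sup id = Finset.univ.erase (0 : Fin μ → ZMod 2) :=
  partition_into_zero_sum_triples_even_general μ he
end

section
/- For every odd μ ≥ 3, there exist at least (2^μ − 4)/4 pairwise disjoint triples {A, B, C} of distinct nonzero vectors in F_2^μ with A + B + C = 0; moreover these triples can be chosen so that at least 3 nonzero vectors of F_2^μ are not used in any triple. -/
namespace ZSODD

abbrev V (n : ℕ) := Fin n → ZMod 2

lemma zm1 (a : ZMod 2) (h : a ≠ 0) : a = 1 := by revert h; revert a; decide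

lemma add_self {n : ℕ} (v : V n) : v + v = 0 := by
  funext i
  show v i + v i = 0
  revert i; intro i; generalize v i = a; revert a; decide

/-- shift with feedback -/
def S {n : ℕ} (v : V (n+1)) : V (n+1) := fun i => v (i+1) + if i = Fin.last n then v 1 else 0

lemma S_add {n : ℕ} (x y : V (n+1)) : S (x + y) = S x + S y := by
  funext i
  simp only [S, Pi.add_apply]
  split <;> ring

lemma Sker {k : ℕ} (z : V (k+2)) (h : S z = 0) : z = 0 := by
  have hi : ∀ i : Fin (k+2), z (i+1) + (if i = Fin.last (k+1) then z 1 else 0) = 0 :=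
    fun i => congrFun h i
  have h0last : (0 : Fin (k+2)) ≠ Fin.last (k+1) := by
    simp [Fin.ext_iff]
  have h1 : z 1 = 0 := by
    have := hi 0
    simpa [h0last] using this
  funext j
  by_cases hj : j = 0
  · subst hj
    have := hi (Fin.last (k+1))
    rw [Fin.last_add_one] at this
    simpa [h1] using this
  · have hsub : (j - 1) + 1 = j := sub_add_cancel j 1
    have hne : j - 1 ≠ Fin.last (k+1) := by
      intro hh
      apply hj
      rw [← hsub, hh, Fin.last_add_one]
    have := hi (j - 1)
    rw [hsub] at this
    simpa [hne] using this

lemma idSker {k : ℕ} (z : V (k+2)) (h : (fun i => z i + S z i) = 0) : z = 0 := by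
  have hi : ∀ i : Fin (k+2), z i + (z (i+1) + (if i = Fin.last (k+1) then z 1 else 0)) = 0 :=
    fun i => congrFun h i
  have step : ∀ i : Fin (k+2), i ≠ Fin.last (k+1) → z (i+1) = z i := by
    intro i hne
    have := hi i
    rw [if_neg hne, add_zero] at this
    have h2 : z (i+1) = - z i := by linear_combination this
    rw [h2]
    generalize z i = a; revert a; decide
  have hall : ∀ (jv : ℕ) (hv : jv < k + 2), z ⟨jv, hv⟩ = z 0 := by
    intro jv
    induction jv with
    | zero => intro hv; rfl
    | succ jj ih =>
      intro hv
      have hjj : jj < k + 2 := by omega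
      have hne : (⟨jj, hjj⟩ : Fin (k+2)) ≠ Fin.last (k+1) := by
        intro hh
        have := congrArg Fin.val hh
        simp only [Fin.val_last] at this
        omega
      have hadd : (⟨jj, hjj⟩ : Fin (k+2)) + 1 = ⟨jj+1, hv⟩ := by
        apply Fin.ext
        simp [Fin.val_add, Fin.val_one, Nat.mod_eq_of_lt hv, Nat.mod_eq_of_lt]
      have := step ⟨jj, hjj⟩ hne
      rw [hadd] at this
      rw [this, ih hjj]
  have h1 : z 1 = z 0 := by
    have : (1 : Fin (k+2)) = ⟨1, by omega⟩ := by
      apply Fin.ext; simp [Fin.val_one]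
    rw [this, hall]
  have hlast : z (Fin.last (k+1)) = z 0 := hall _ _
  have h0 : z 0 = 0 := by
    have := hi (Fin.last (k+1))
    rw [Fin.last_add_one, hlast, h1] at this
    simp only [if_pos] at this
    generalize z 0 = a at this; revert this; revert a; decide
  funext j
  have : z j = z 0 := by
    have := hall j.val j.isLt
    simpa [Fin.eta] using this
  rw [this, h0]
  rfl

lemma nz_unique (x y : V 1) (hx : x ≠ 0) (hy : y ≠ 0) : x = y := by
  funext i
  have hi : i = 0 := Subsingleton.elim _ _
  subst hi
  have hx0 : x 0 ≠ 0 := by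
    intro h; apply hx; funext j
    have : j = 0 := Subsingleton.elim _ _
    rw [this]; exact h
  have hy0 : y 0 ≠ 0 := by
    intro h; apply hy; funext j
    have : j = 0 := Subsingleton.elim _ _
    rw [this]; exact h
  rw [zm1 _ hx0, zm1 _ hy0]

lemma eq_of_add_eq_zero' {n : ℕ} (x y : V n) (h : x + y = 0) : x = y := by
  have h2 : x + y + y = 0 + y := by rw [h]
  rwa [add_assoc, add_self, add_zero, zero_add] at h2

lemma S_injOn {m : ℕ} (x y : V (m+1)) (hx : x ≠ 0) (hy : y ≠ 0) (h : S x = S y) : x = y := by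
  cases m with
  | zero => exact nz_unique x y hx hy
  | succ k =>
    have hk : S (x + y) = 0 := by
      rw [S_add, h, add_self]
    exact eq_of_add_eq_zero' x y (Sker (x + y) hk)

lemma idS_injOn {m : ℕ} (x y : V (m+1)) (hx : x ≠ 0) (hy : y ≠ 0)
    (h : x + S x = y + S y) : x = y := by
  cases m with
  | zero => exact nz_unique x y hx hy
  | succ k =>
    have hk : (fun i => (x+y) i + S (x+y) i) = 0 := by
      funext i
      have : S (x+y) = S x + S y := S_add x y
      rw [this]
      show (x + y) i + (S x + S y) i = 0
      have hc : (x + S x) + (y + S y) = (x + y) + (S x + S y) := by ring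
      have : (x + S x) + (y + S y) = 0 := by rw [h, add_self]
      rw [hc] at this
      calc (x + y) i + (S x + S y) i = ((x + y) + (S x + S y)) i := rfl
        _ = (0 : V (k+2)) i := by rw [this]
        _ = 0 := rfl
    exact eq_of_add_eq_zero' x y (idSker (x + y) hk)

/-- the vector (a, b, z) -/
def w {m : ℕ} (a b : ZMod 2) (z : V (m+1)) : V (m+3) := Fin.cons a (Fin.cons b z)

lemma w_zero {m : ℕ} (a b : ZMod 2) (z : V (m+1)) : w a b z 0 = a := rfl

lemma w_one {m : ℕ} (a b : ZMod 2) (z : V (m+1)) : w a b z 1 = b := rfl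

lemma w_succ {m : ℕ} (a b : ZMod 2) (z : V (m+1)) (j : Fin (m+1)) :
    w a b z j.succ.succ = z j := by
  simp [w, Fin.cons_succ]

lemma w_add {m : ℕ} (a b a' b' : ZMod 2) (z z' : V (m+1)) :
    w a b z + w a' b' z' = w (a+a') (b+b') (z+z') := by
  funext i
  refine Fin.cases ?_ (fun j => ?_) i
  · rfl
  · refine Fin.cases ?_ (fun j' => ?_) j
    · rfl
    · show w a b z j'.succ.succ + w a' b' z' j'.succ.succ = w (a+a') (b+b') (z+z') j'.succ.succ
      rw [w_succ, w_succ, w_succ]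
      rfl

lemma w_inj {m : ℕ} {a b a' b' : ZMod 2} {z z' : V (m+1)}
    (h : w a b z = w a' b' z') : a = a' ∧ b = b' ∧ z = z' := by
  refine ⟨congrFun h 0, congrFun h 1, funext fun j => ?_⟩
  have := congrFun h j.succ.succ
  rwa [w_succ, w_succ] at this

lemma w_eq_zero_iff {m : ℕ} (a b : ZMod 2) (z : V (m+1)) :
    w a b z = 0 ↔ a = 0 ∧ b = 0 ∧ z = 0 := by
  constructor
  · intro h
    have h2 : w a b z = w 0 0 0 := by
      rw [h]; funext i
      refine Fin.cases rfl (fun j => ?_) i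
      refine Fin.cases rfl (fun j' => ?_) j
      rw [w_succ]; rfl
    exact w_inj h2
  · rintro ⟨rfl, rfl, rfl⟩
    funext i
    refine Fin.cases rfl (fun j => ?_) i
    refine Fin.cases rfl (fun j' => ?_) j
    rw [w_succ]; rfl

def trip {m : ℕ} (x : V (m+1)) : Finset (V (m+3)) :=
  {w 0 1 x, w 1 0 (S x), w 1 1 (x + S x)}

lemma ne01 : (0 : ZMod 2) ≠ 1 := by decide

lemma tripAB {m : ℕ} (x y : V (m+1)) : w 0 1 x ≠ w 1 0 (S y) := by
  intro h; exact ne01 (w_inj h).1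

lemma tripAC {m : ℕ} (x y : V (m+1)) : w 0 1 x ≠ w 1 1 (y + S y) := by
  intro h; exact ne01 (w_inj h).1

lemma tripBC {m : ℕ} (x y : V (m+1)) : w 1 0 (S x) ≠ w 1 1 (y + S y) := by
  intro h; exact ne01 (w_inj h).2.1

lemma trip_card {m : ℕ} (x : V (m+1)) : (trip x).card = 3 := by
  rw [trip, Finset.card_insert_of_notMem, Finset.card_insert_of_notMem,
    Finset.card_singleton]
  · simp [tripBC x x]
  · simp [tripAB x x, tripAC x x]

lemma trip_zero_notMem {m : ℕ} (x : V (m+1)) : (0 : V (m+3)) ∉ trip x := by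
  simp only [trip, Finset.mem_insert, Finset.mem_singleton]
  push_neg
  refine ⟨?_, ?_, ?_⟩ <;> intro h <;>
    · have := (w_eq_zero_iff _ _ _).mp h.symm
      first
        | exact ne01 this.1.symm
        | exact ne01 this.2.1.symm

lemma trip_sum {m : ℕ} (x : V (m+1)) : ∑ v ∈ trip x, v = 0 := by
  rw [trip]
  rw [Finset.sum_insert (by simp [tripAB x x, tripAC x x]),
    Finset.sum_insert (by simp [tripBC x x]), Finset.sum_singleton]
  rw [w_add, w_add]
  have hz : x + (S x + (x + S x)) = 0 := by
    have : x + (S x + (x + S x)) = (x + x) + (S x + S x) := by ring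
    rw [this, add_self, add_self, add_zero]
  rw [hz]
  have : (0 : ZMod 2) + (1+1) = 0 ∧ (1 : ZMod 2) + (0+1) = 0 := by decide
  rw [this.1, this.2]
  exact (w_eq_zero_iff 0 0 0).mpr ⟨rfl, rfl, rfl⟩

lemma trip_mem_iff {m : ℕ} (x : V (m+1)) (p : V (m+3)) :
    p ∈ trip x ↔ p = w 0 1 x ∨ p = w 1 0 (S x) ∨ p = w 1 1 (x + S x) := by
  simp [trip]

lemma trip_disjoint {m : ℕ} (x y : V (m+1)) (hx : x ≠ 0) (hy : y ≠ 0) (hxy : x ≠ y) :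
    Disjoint (trip x) (trip y) := by
  rw [Finset.disjoint_left]
  intro p hpx hpy
  rw [trip_mem_iff] at hpx hpy
  rcases hpx with h1 | h1 | h1 <;> rcases hpy with h2 | h2 | h2 <;>
    rw [h1] at h2
  · exact hxy (w_inj h2).2.2
  · exact tripAB x y h2
  · exact tripAC x y h2
  · exact tripAB y x h2.symm
  · exact hxy (S_injOn x y hx hy (w_inj h2).2.2)
  · exact tripBC x y h2
  · exact tripAC y x h2.symm
  · exact tripBC y x h2.symm
  · exact hxy (idS_injOn x y hx hy (w_inj h2).2.2)

lemma main (m : ℕ) :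
    ∃ T : Finset (Finset (Fin (m+3) → ZMod 2)),
      (2 ^ (m+3) - 4) / 4 ≤ T.card ∧
      (∀ s ∈ T, s.card = 3 ∧ (0 : Fin (m+3) → ZMod 2) ∉ s ∧ ∑ x ∈ s, x = 0) ∧
      (T : Set (Finset (Fin (m+3) → ZMod 2))).PairwiseDisjoint id ∧
      3 ≤ ((Finset.univ.erase (0 : Fin (m+3) → ZMod 2)) \ T.sup id).card := by
  classical
  set D : Finset (V (m+1)) := Finset.univ.erase 0 with hD
  refine ⟨D.image trip, ?_, ?_, ?_, ?_⟩
  · have hinj : Set.InjOn trip (↑D : Set (V (m+1))) := by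
      intro x hx y hy h
      have hx0 : x ≠ 0 := by simpa [hD] using hx
      have hy0 : y ≠ 0 := by simpa [hD] using hy
      have : w 0 1 x ∈ trip y := by
        rw [← h, trip_mem_iff]; left; rfl
      rw [trip_mem_iff] at this
      rcases this with h2 | h2 | h2
      · exact (w_inj h2).2.2
      · exact absurd h2 (tripAB x y)
      · exact absurd h2 (tripAC x y)
    rw [Finset.card_image_of_injOn hinj]
    have hcard : D.card = 2 ^ (m+1) - 1 := by
      rw [hD, Finset.card_erase_of_mem (Finset.mem_univ _), Finset.card_univ]
      congr 1
      rw [Fintype.card_fun, ZMod.card, Fintype.card_fin]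
    rw [hcard]
    have h1 : 2 ^ (m+3) = 2 ^ m * 8 := by ring
    have h2 : 2 ^ (m+1) = 2 ^ m * 2 := by ring
    have h3 : 1 ≤ 2 ^ m := Nat.one_le_two_pow
    omega
  · intro s hs
    rw [Finset.mem_image] at hs
    obtain ⟨x, hx, rfl⟩ := hs
    exact ⟨trip_card x, trip_zero_notMem x, trip_sum x⟩
  · intro s hs t ht hst
    rw [Finset.coe_image] at hs ht
    obtain ⟨x, hx, rfl⟩ := hs
    obtain ⟨y, hy, rfl⟩ := ht
    have hx0 : x ≠ 0 := by simpa [hD] using hx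
    have hy0 : y ≠ 0 := by simpa [hD] using hy
    have hxy : x ≠ y := fun h => hst (by rw [h])
    exact trip_disjoint x y hx0 hy0 hxy
  · set T := D.image trip with hT
    have hsup : (T.sup id).card ≤ 3 * T.card := by
      rw [Finset.sup_eq_biUnion]
      calc (T.biUnion id).card ≤ ∑ s ∈ T, (id s).card := Finset.card_biUnion_le
        _ ≤ ∑ s ∈ T, 3 := by
            apply Finset.sum_le_sum
            intro s hs
            rw [Finset.mem_image] at hs
            obtain ⟨x, hx, rfl⟩ := hs
            exact le_of_eq (trip_card x)
        _ = 3 * T.card := by rw [Finset.sum_const, smul_eq_mul, mul_comm]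
    have hTcard : T.card ≤ 2 ^ (m+1) - 1 := by
      calc T.card ≤ D.card := Finset.card_image_le
        _ = 2 ^ (m+1) - 1 := by
            rw [hD, Finset.card_erase_of_mem (Finset.mem_univ _), Finset.card_univ]
            congr 1
            rw [Fintype.card_fun, ZMod.card, Fintype.card_fin]
    have hbig : (Finset.univ.erase (0 : V (m+3))).card = 2 ^ (m+3) - 1 := by
      rw [Finset.card_erase_of_mem (Finset.mem_univ _), Finset.card_univ]
      congr 1
      rw [Fintype.card_fun, ZMod.card, Fintype.card_fin]
    have hle := Finset.card_le_card_sdiff_add_card (s := Finset.univ.erase (0 : V (m+3)))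
      (t := T.sup id)
    have h1 : 2 ^ (m+3) = 2 ^ m * 8 := by ring
    have h2 : 2 ^ (m+1) = 2 ^ m * 2 := by ring
    have h3 : 1 ≤ 2 ^ m := Nat.one_le_two_pow
    omega

end ZSODD

/-- For odd `μ ≥ 3`, there are at least `(2^μ - 4)/4` pairwise disjoint triples of
distinct nonzero vectors of `F_2^μ` summing to zero, chosen so that at least 3 nonzero
vectors are not used in any triple. -/
theorem zero_sum_triples_odd (μ : ℕ) (hμ : 3 ≤ μ) (ho : Odd μ) :
    ∃ T : Finset (Finset (Fin μ → ZMod 2)),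
      (2 ^ μ - 4) / 4 ≤ T.card ∧
      (∀ s ∈ T, s.card = 3 ∧ (0 : Fin μ → ZMod 2) ∉ s ∧ ∑ x ∈ s, x = 0) ∧
      (T : Set (Finset (Fin μ → ZMod 2))).PairwiseDisjoint id ∧
      3 ≤ ((Finset.univ.erase (0 : Fin μ → ZMod 2)) \ T.sup id).card := by
  obtain ⟨m, rfl⟩ : ∃ m, μ = m + 3 := ⟨μ - 3, by omega⟩
  exact ZSODD.main m
end
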